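/- Lemma B.5 (Lipschitz continuity of the softmax-weighted average). Let K ≥ 1 and β, R₁, R₂ > 0, and define g(z,w) = Σ_{i=1}^K (exp(−β·z_i)/Σ_{j=1}^K exp(−β·z_j))·w_i for z, w ∈ ℝ^K. If ‖w‖_∞ ≤ 4·R₁·R₂, then for all z′, w′ ∈ ℝ^K: |g(z,w) − g(z′,w′)| ≤ 4√2·β·R₁·R₂·‖z − z′‖₂ + ‖w − w′‖₂. -/

import Mathlib

/-!
Write `p = softmax x` for the weights `exp (x i) / ∑ j, exp (x j)`. Along the segment
`t ↦ y + t • u` the derivative of `∑ i, p i * w i` is the covariance `∑ i, p i * (u i - m) * w i`,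
`m = ∑ j, p j * u j`. Bounding `|w i| ≤ M` and then `∑ i, p i * |u i - m|` by the standard
deviation, which is at most `√(∑ i, u i ^ 2)`, the mean value theorem makes `x ↦ ∑ i, p i * w i`
`M`-Lipschitz for the Euclidean norm; rescaling `x = -β • z` gives the factor `β`. Changing `w`
moves a convex combination by at most `max |w i - w' i| ≤ ‖w - w'‖₂`.
-/

open Finset Real

variable {ι : Type*} [Fintype ι]

noncomputable def softmax (x : ι → ℝ) (i : ι) : ℝ := exp (x i) / ∑ j, exp (x j)

lemma sum_exp_pos [Nonempty ι] (x : ι → ℝ) : 0 < ∑ j, exp (x j) :=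
  sum_pos (fun _ _ => exp_pos _) univ_nonempty

lemma softmax_nonneg (x : ι → ℝ) (i : ι) : 0 ≤ softmax x i :=
  div_nonneg (exp_pos _).le (sum_nonneg fun _ _ => (exp_pos _).le)

lemma sum_softmax [Nonempty ι] (x : ι → ℝ) : ∑ i, softmax x i = 1 := by
  simp only [softmax, ← sum_div]
  exact div_self (sum_exp_pos x).ne'

lemma sq_le_sum_sq (d : ι → ℝ) (i : ι) : d i ^ 2 ≤ ∑ j, d j ^ 2 :=
  single_le_sum (fun j _ => sq_nonneg (d j)) (mem_univ i)

section ProbabilityWeights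

variable {p : ι → ℝ}

lemma abs_sum_mul_le_sqrt_sum_sq (hp : ∀ i, 0 ≤ p i) (hp1 : ∑ i, p i = 1) (d : ι → ℝ) :
    |∑ i, p i * d i| ≤ √(∑ i, d i ^ 2) :=
  calc |∑ i, p i * d i| ≤ ∑ i, p i * |d i| := by
        simpa only [abs_mul, abs_of_nonneg (hp _)] using
          abs_sum_le_sum_abs (fun i => p i * d i) univ
    _ ≤ ∑ i, p i * √(∑ j, d j ^ 2) := by
        gcongr with i
        · exact hp i
        · exact abs_le_sqrt (sq_le_sum_sq d i)
    _ = √(∑ i, d i ^ 2) := by rw [← sum_mul, hp1, one_mul]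

lemma sum_mul_sub_sq_eq (hp1 : ∑ i, p i = 1) (u : ι → ℝ) :
    ∑ i, p i * (u i - ∑ j, p j * u j) ^ 2 = ∑ i, p i * u i ^ 2 - (∑ j, p j * u j) ^ 2 := by
  set m := ∑ j, p j * u j
  have : ∀ i, p i * (u i - m) ^ 2 = p i * u i ^ 2 - 2 * m * (p i * u i) + m ^ 2 * p i :=
    fun i => by ring
  simp only [this, sum_add_distrib, sum_sub_distrib, ← mul_sum, hp1]
  ring

lemma sum_mul_abs_sub_le_sqrt_sum_sq (hp : ∀ i, 0 ≤ p i) (hp1 : ∑ i, p i = 1) (u : ι → ℝ) :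
    ∑ i, p i * |u i - ∑ j, p j * u j| ≤ √(∑ i, u i ^ 2) := by
  set m := ∑ j, p j * u j
  have cauchy_schwarz : (∑ i, p i * |u i - m|) ^ 2 ≤ ∑ i, p i * (u i - m) ^ 2 := by
    simpa only [hp1, one_mul] using sum_sq_le_sum_mul_sum_of_sq_le_mul univ
      (r := fun i => p i * |u i - m|) (fun i _ => hp i)
      (fun i _ => mul_nonneg (hp i) (sq_nonneg _))
      (fun i _ => le_of_eq (by rw [mul_pow, sq_abs]; ring))
  have second_moment : ∑ i, p i * u i ^ 2 ≤ ∑ i, u i ^ 2 :=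
    calc ∑ i, p i * u i ^ 2 ≤ ∑ i, p i * ∑ j, u j ^ 2 := by
          gcongr with i
          · exact hp i
          · exact sq_le_sum_sq u i
      _ = ∑ i, u i ^ 2 := by rw [← sum_mul, hp1, one_mul]
  refine le_sqrt_of_sq_le ?_
  linarith [sum_mul_sub_sq_eq hp1 u, sq_nonneg m]

lemma abs_sum_mul_sub_mul_le (hp : ∀ i, 0 ≤ p i) (hp1 : ∑ i, p i = 1) {M : ℝ} (hM : 0 ≤ M)
    {w : ι → ℝ} (hw : ∀ i, |w i| ≤ M) (u : ι → ℝ) :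
    |∑ i, p i * (u i - ∑ j, p j * u j) * w i| ≤ M * √(∑ i, u i ^ 2) :=
  calc |∑ i, p i * (u i - ∑ j, p j * u j) * w i|
      ≤ ∑ i, M * (p i * |u i - ∑ j, p j * u j|) := by
        refine (abs_sum_le_sum_abs _ _).trans (sum_le_sum fun i _ => ?_)
        rw [abs_mul, abs_mul, abs_of_nonneg (hp i), mul_comm M]
        exact mul_le_mul_of_nonneg_left (hw i) (mul_nonneg (hp i) (abs_nonneg _))
    _ ≤ M * √(∑ i, u i ^ 2) := by
        rw [← mul_sum]
        exact mul_le_mul_of_nonneg_left (sum_mul_abs_sub_le_sqrt_sum_sq hp hp1 u) hM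

end ProbabilityWeights

lemma hasDerivAt_softmax_line [Nonempty ι] (x u : ι → ℝ) (i : ι) (t : ℝ) :
    HasDerivAt (fun s => softmax (x + s • u) i)
      (softmax (x + t • u) i * (u i - ∑ j, softmax (x + t • u) j * u j)) t := by
  have hexp : ∀ j, HasDerivAt (fun s => exp ((x + s • u) j)) (exp ((x + t • u) j) * u j) t :=
    fun j => by
      simpa only [Pi.add_apply, Pi.smul_apply, smul_eq_mul] using
        ((hasDerivAt_mul_const (u j)).const_add (x j)).exp
  have hS := (sum_exp_pos (x + t • u)).ne'
  refine ((hexp i).div (HasDerivAt.fun_sum fun j _ => hexp j) hS).congr_deriv ?_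
  simp only [softmax, div_mul_eq_mul_div, ← sum_div]
  field_simp

lemma hasDerivAt_sum_softmax_line_mul [Nonempty ι] (x u w : ι → ℝ) (t : ℝ) :
    HasDerivAt (fun s => ∑ i, softmax (x + s • u) i * w i)
      (∑ i, softmax (x + t • u) i * (u i - ∑ j, softmax (x + t • u) j * u j) * w i) t :=
  HasDerivAt.fun_sum fun i _ => (hasDerivAt_softmax_line x u i t).mul_const (w i)

theorem abs_sum_softmax_mul_sub_le [Nonempty ι] {M : ℝ} {w : ι → ℝ} (hw : ∀ i, |w i| ≤ M)
    (x y : ι → ℝ) :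
    |∑ i, softmax x i * w i - ∑ i, softmax y i * w i| ≤ M * √(∑ i, (x i - y i) ^ 2) := by
  have hM : 0 ≤ M := (abs_nonneg _).trans (hw (Classical.arbitrary ι))
  have h := norm_image_sub_le_of_norm_deriv_le_segment_01'
    (fun t _ => (hasDerivAt_sum_softmax_line_mul y (x - y) w t).hasDerivWithinAt)
    (fun t _ => abs_sum_mul_sub_mul_le (softmax_nonneg _) (sum_softmax _) hM hw (x - y))
  simpa using h

lemma sqrt_sum_sq_smul_sub (c : ℝ) (x y : ι → ℝ) :
    √(∑ i, ((c • x) i - (c • y) i) ^ 2) = |c| * √(∑ i, (x i - y i) ^ 2) := by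
  simp only [Pi.smul_apply, smul_eq_mul, ← mul_sub, mul_pow, ← mul_sum, sqrt_mul (sq_nonneg c),
    sqrt_sq_eq_abs]

theorem stmt13_general (K : ℕ) (hK : 1 ≤ K) (β R₁ R₂ : ℝ)
    (hβ : 0 < β)
    (z w z' w' : Fin K → ℝ) (hw : ∀ i, |w i| ≤ 4 * R₁ * R₂) :
    |(∑ i, Real.exp (-β * z i) / (∑ j, Real.exp (-β * z j)) * w i)
        - ∑ i, Real.exp (-β * z' i) / (∑ j, Real.exp (-β * z' j)) * w' i|
      ≤ 4 * Real.sqrt 2 * β * R₁ * R₂ * Real.sqrt (∑ i, (z i - z' i) ^ 2)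
          + Real.sqrt (∑ i, (w i - w' i) ^ 2) := by
  have : Nonempty (Fin K) := Fin.pos_iff_nonempty.mp hK
  have hM : 0 ≤ 4 * R₁ * R₂ := (abs_nonneg _).trans (hw ⟨0, hK⟩)
  have hz := abs_sum_softmax_mul_sub_le hw (-β • z) (-β • z')
  rw [sqrt_sum_sq_smul_sub, abs_neg, abs_of_pos hβ] at hz
  have hw' := abs_sum_mul_le_sqrt_sum_sq (softmax_nonneg (-β • z')) (sum_softmax _) (w - w')
  simp only [Pi.sub_apply, mul_sub, sum_sub_distrib] at hw'
  calc _ ≤ |∑ i, softmax (-β • z) i * w i - ∑ i, softmax (-β • z') i * w i|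
        + |∑ i, softmax (-β • z') i * w i - ∑ i, softmax (-β • z') i * w' i| :=
        abs_sub_le _ _ _
    _ ≤ 4 * R₁ * R₂ * (β * √(∑ i, (z i - z' i) ^ 2)) + √(∑ i, (w i - w' i) ^ 2) :=
        add_le_add hz hw'
    _ ≤ _ := by
        have : 1 ≤ √2 := one_le_sqrt.mpr one_le_two
        gcongr ?_ + _
        nlinarith [mul_nonneg (mul_nonneg hM hβ.le) (sqrt_nonneg (∑ i, (z i - z' i) ^ 2))]

/-- **Lemma B.5** (Lipschitz continuity of the softmax-weighted average). -/
theorem stmt13 (K : ℕ) (hK : 1 ≤ K) (β R₁ R₂ : ℝ)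
    (hβ : 0 < β) (hR₁ : 0 < R₁) (hR₂ : 0 < R₂)
    (z w z' w' : Fin K → ℝ) (hw : ∀ i, |w i| ≤ 4 * R₁ * R₂) :
    |(∑ i, Real.exp (-β * z i) / (∑ j, Real.exp (-β * z j)) * w i)
        - ∑ i, Real.exp (-β * z' i) / (∑ j, Real.exp (-β * z' j)) * w' i|
      ≤ 4 * Real.sqrt 2 * β * R₁ * R₂ * Real.sqrt (∑ i, (z i - z' i) ^ 2)
          + Real.sqrt (∑ i, (w i - w' i) ^ 2) :=
  stmt13_general K hK β R₁ R₂ hβ z w z' w' hw
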